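/- arXiv:2201.03077 — 5 statements merged into one kernel-verified Lean document; each statement's English description precedes it below -/
import Mathlib

section
/- Assume the N-vector of ones 1_N lies in the column span of X₁ (i.e., there exists a ∈ ℝ^{P₁} with X₁ a = 1_N). Then every row of the weight matrix W = X V Xᵀ Φ⁻¹ sums to 1; that is, W · 1_N = 1_N. -/
/-!
Write `X = [X₁ X₂]` and `M = Xᵀ Φ⁻¹ X + diag(0, Σ⁻¹)`, so that `W = X M⁻¹ Xᵀ Φ⁻¹`. If `X₁ a = 1`,
then `1 = X b` with `b = (a, 0)`, and the penalty block `diag(0, Σ⁻¹)` annihilates `b`; hence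
`Xᵀ Φ⁻¹ 1 = Xᵀ Φ⁻¹ X b = M b` and `W 1 = X M⁻¹ M b = X b = 1`. The only analytic input is that `M`
is invertible: its quadratic form `‖X x‖²_{Φ⁻¹} + ‖x₂‖²_{Σ⁻¹}` vanishes only if `x₂ = 0` and then
`X₁ x₁ = 0`, i.e. `x = 0` since `X₁` has independent columns.
-/

open Matrix

namespace Matrix

variable {m n n₁ n₂ R : Type*} [Fintype m] [Fintype n] [Fintype n₁] [Fintype n₂]

lemma star_dotProduct_fromBlocks_zero_mulVec [CommRing R] [StarRing R] (D : Matrix n₂ n₂ R)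
    (x : n₁ ⊕ n₂ → R) :
    star x ⬝ᵥ (fromBlocks 0 0 0 D *ᵥ x) = star (x ∘ Sum.inr) ⬝ᵥ (D *ᵥ (x ∘ Sum.inr)) := by
  rw [fromBlocks_mulVec, ← Sum.elim_comp_inl_inr (star x), sumElim_dotProduct_sumElim]
  simp only [zero_mulVec, add_zero, dotProduct_zero, zero_add]
  rfl

section PosDef

variable [CommRing R] [PartialOrder R] [StarRing R]

lemma PosSemidef.posDef_add [IsOrderedCancelAddMonoid R] {A B : Matrix n n R}
    (hA : A.PosSemidef) (hB : B.PosSemidef)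
    (h : ∀ x, x ≠ 0 → 0 < star x ⬝ᵥ (A *ᵥ x) ∨ 0 < star x ⬝ᵥ (B *ᵥ x)) : (A + B).PosDef := by
  refine PosDef.of_dotProduct_mulVec_pos (hA.isHermitian.add hB.isHermitian) fun x hx => ?_
  rw [add_mulVec, dotProduct_add]
  rcases h x hx with hAx | hBx
  · exact add_pos_of_pos_of_nonneg hAx (hB.dotProduct_mulVec_nonneg x)
  · exact add_pos_of_nonneg_of_pos (hA.dotProduct_mulVec_nonneg x) hBx

lemma PosSemidef.fromBlocks_zero [DecidableEq n₁] {D : Matrix n₂ n₂ R} (hD : D.PosSemidef) :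
    (fromBlocks 0 0 0 D : Matrix (n₁ ⊕ n₂) (n₁ ⊕ n₂) R).PosSemidef := by
  refine PosSemidef.of_dotProduct_mulVec_nonneg ?_ fun x => ?_
  · simp [IsHermitian, fromBlocks_conjTranspose, hD.isHermitian.eq]
  · rw [star_dotProduct_fromBlocks_zero_mulVec]
    exact hD.dotProduct_mulVec_nonneg _

lemma PosDef.conjTranspose_fromCols_mul_mul_add_fromBlocks_zero [IsOrderedCancelAddMonoid R]
    [StarOrderedRing R] [DecidableEq n₁] {Q : Matrix m m R} (hQ : Q.PosDef)
    {A : Matrix m n₁ R} (hA : Function.Injective A.mulVec) (B : Matrix m n₂ R)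
    {D : Matrix n₂ n₂ R} (hD : D.PosDef) :
    ((fromCols A B)ᴴ * Q * fromCols A B + fromBlocks 0 0 0 D).PosDef := by
  refine (hQ.posSemidef.conjTranspose_mul_mul_same _).posDef_add hD.posSemidef.fromBlocks_zero
    fun x hx => ?_
  rw [star_dotProduct_fromBlocks_zero_mulVec, ← mulVec_mulVec, ← mulVec_mulVec, dotProduct_mulVec,
    ← star_mulVec]
  by_cases hx₂ : x ∘ Sum.inr = 0
  · left
    have hx₁ : x ∘ Sum.inl ≠ 0 := fun hx₁ => hx <| by
      rw [← Sum.elim_comp_inl_inr x, hx₁, hx₂]; exact Sum.elim_zero_zero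
    have hXx : fromCols A B *ᵥ x ≠ 0 := by
      rw [fromCols_mulVec, hx₂, mulVec_zero, add_zero]
      exact fun h => hx₁ (hA (h.trans (mulVec_zero A).symm))
    exact hQ.dotProduct_mulVec_pos hXx
  · exact Or.inr (hD.dotProduct_mulVec_pos hx₂)

end PosDef

lemma fromCols_mul_inv_mul_mulVec_fromCols_left [CommRing R] [DecidableEq n₁] [DecidableEq n₂]
    (A : Matrix m n₁ R) (B : Matrix m n₂ R) (Q : Matrix m m R) (D : Matrix n₂ n₂ R)
    (hM : IsUnit ((fromCols A B)ᵀ * Q * fromCols A B + fromBlocks 0 0 0 D).det) (a : n₁ → R) :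
    (fromCols A B * ((fromCols A B)ᵀ * Q * fromCols A B + fromBlocks 0 0 0 D)⁻¹ *
      (fromCols A B)ᵀ * Q) *ᵥ (A *ᵥ a) = A *ᵥ a := by
  set X := fromCols A B
  set M := Xᵀ * Q * X + fromBlocks 0 0 0 D
  set b : n₁ ⊕ n₂ → R := Sum.elim a 0
  have hXb : X *ᵥ b = A *ᵥ a := by simp [X, b]
  have hMb : M *ᵥ b = (Xᵀ * Q * X) *ᵥ b := by simp [M, b, add_mulVec, fromBlocks_mulVec]
  calc (X * M⁻¹ * Xᵀ * Q) *ᵥ (A *ᵥ a) = X *ᵥ (M⁻¹ *ᵥ ((Xᵀ * Q * X) *ᵥ b)) := by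
        simp only [← hXb, mulVec_mulVec, Matrix.mul_assoc]
    _ = X *ᵥ (M⁻¹ *ᵥ (M *ᵥ b)) := by rw [hMb]
    _ = A *ᵥ a := by rw [mulVec_mulVec b, nonsing_inv_mul _ hM, one_mulVec, hXb]

end Matrix

theorem stmt_0_general (N P₁ P₂ : ℕ)
    (X₁ : Matrix (Fin N) (Fin P₁) ℝ) (X₂ : Matrix (Fin N) (Fin P₂) ℝ)
    (hX₁ : LinearIndependent ℝ X₁ᵀ)
    (d : Fin N → ℝ) (hd : ∀ i, 0 < d i)
    (S : Matrix (Fin P₂) (Fin P₂) ℝ) (hS : S.PosDef)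
    (hones : ∃ a : Fin P₁ → ℝ, X₁ *ᵥ a = fun _ => (1 : ℝ)) :
    let Φ : Matrix (Fin N) (Fin N) ℝ := Matrix.diagonal d
    let X : Matrix (Fin N) (Fin P₁ ⊕ Fin P₂) ℝ := Matrix.fromCols X₁ X₂
    let V : Matrix (Fin P₁ ⊕ Fin P₂) (Fin P₁ ⊕ Fin P₂) ℝ :=
      (Xᵀ * Φ⁻¹ * X + Matrix.fromBlocks 0 0 0 S⁻¹)⁻¹
    let W : Matrix (Fin N) (Fin N) ℝ := X * V * Xᵀ * Φ⁻¹
    W *ᵥ (fun _ => (1 : ℝ)) = fun _ => (1 : ℝ) := by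
  intro Φ X V W
  obtain ⟨a, ha⟩ := hones
  have hM : (Xᵀ * Φ⁻¹ * X + fromBlocks 0 0 0 S⁻¹).PosDef := by
    simpa only [conjTranspose_eq_transpose_of_trivial] using
      (posDef_diagonal_iff.mpr hd).inv.conjTranspose_fromCols_mul_mul_add_fromBlocks_zero
        (mulVec_injective_iff.mpr hX₁) X₂ hS.inv
  rw [← ha]
  exact fromCols_mul_inv_mul_mulVec_fromCols_left X₁ X₂ Φ⁻¹ S⁻¹
    ((isUnit_iff_isUnit_det _).mp hM.isUnit) a

/-- If the vector of ones lies in the column span of `X₁`, then every row of the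
weight matrix `W = X V Xᵀ Φ⁻¹` sums to 1, i.e. `W · 1 = 1`. -/
theorem stmt_0 (N P₁ P₂ : ℕ) (hN : 0 < N) (hP₁ : 0 < P₁) (hP₂ : 0 < P₂)
    (X₁ : Matrix (Fin N) (Fin P₁) ℝ) (X₂ : Matrix (Fin N) (Fin P₂) ℝ)
    (hX₁ : LinearIndependent ℝ X₁ᵀ)
    (d : Fin N → ℝ) (hd : ∀ i, 0 < d i)
    (S : Matrix (Fin P₂) (Fin P₂) ℝ) (hS : S.PosDef)
    (hones : ∃ a : Fin P₁ → ℝ, X₁ *ᵥ a = fun _ => (1 : ℝ)) :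
    let Φ : Matrix (Fin N) (Fin N) ℝ := Matrix.diagonal d
    let X : Matrix (Fin N) (Fin P₁ ⊕ Fin P₂) ℝ := Matrix.fromCols X₁ X₂
    let V : Matrix (Fin P₁ ⊕ Fin P₂) (Fin P₁ ⊕ Fin P₂) ℝ :=
      (Xᵀ * Φ⁻¹ * X + Matrix.fromBlocks 0 0 0 S⁻¹)⁻¹
    let W : Matrix (Fin N) (Fin N) ℝ := X * V * Xᵀ * Φ⁻¹
    W *ᵥ (fun _ => (1 : ℝ)) = fun _ => (1 : ℝ) :=
  stmt_0_general N P₁ P₂ X₁ X₂ hX₁ d hd S hS hones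
end

section
/- Assume the N-vector of ones 1_N lies in the column span of X₁. Fix i ∈ {1,…,N}. Then the shrinkage factor satisfies 0 < b_{iBᵢ} ≤ 1 and the pooling factor satisfies 0 ≤ b_{iLᵢ} < 1, and b_{iLᵢ} = 1 − b_{iBᵢ}. -/
/-!
`W` is the hat matrix `X M⁻¹ Xᵀ Φ⁻¹` of the penalised normal equations with
`M = Xᵀ Φ⁻¹ X + blockDiag(0, Σ⁻¹)`, which is positive definite because `X₁` has independent
columns and `Σ` is positive definite. The penalty does not see the `X₁` block, so from `1 = X₁ a` we get
`M (a, 0) = Xᵀ Φ⁻¹ 1` and hence `W 1 = X (a, 0) = 1`: the rows of `W` sum to one, which gives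
`b_{iL} = 1 - b_{iB}`. Within the borrower cluster `W i j = q / φⱼ²` with `q = xᵢᵀ M⁻¹ xᵢ > 0`,
so `b_{iB} = q s` with `s = ∑_{j ∈ B} φⱼ⁻² > 0`. Finally, for `v = M⁻¹ xᵢ`,
`q = vᵀ M v ≥ ∑_{j ∈ B} φⱼ⁻² (xⱼᵀ v)² = s q²`, i.e. `b_{iB} ≤ 1`.
-/

open Matrix

namespace Matrix

variable {n p p₁ p₂ : Type*} [Fintype n] [Fintype p] [Fintype p₁] [Fintype p₂]

theorem dotProduct_transpose_mul_mul_mulVec {R : Type*} [CommSemiring R] (X : Matrix n p R)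
    (D : Matrix n n R) (v : p → R) :
    v ⬝ᵥ ((Xᵀ * D * X) *ᵥ v) = (X *ᵥ v) ⬝ᵥ (D *ᵥ (X *ᵥ v)) := by
  rw [← mulVec_mulVec, ← mulVec_mulVec, dotProduct_mulVec, vecMul_transpose]

theorem dotProduct_fromBlocks_zero_mulVec {R : Type*} [NonUnitalNonAssocSemiring R]
    (T : Matrix p₂ p₂ R) (v : p₁ ⊕ p₂ → R) :
    v ⬝ᵥ (fromBlocks 0 0 0 T *ᵥ v) = (v ∘ Sum.inr) ⬝ᵥ (T *ᵥ (v ∘ Sum.inr)) := by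
  simp [fromBlocks_mulVec, dotProduct, Fintype.sum_sum_type]

theorem PosSemidef.fromBlocks_zero_s1 {T : Matrix p₂ p₂ ℝ} (hT : T.PosSemidef) :
    (fromBlocks 0 0 0 T : Matrix (p₁ ⊕ p₂) (p₁ ⊕ p₂) ℝ).PosSemidef := by
  refine .of_dotProduct_mulVec_nonneg (isHermitian_zero.fromBlocks (by simp) hT.isHermitian)
    fun v => ?_
  rw [star_trivial, dotProduct_fromBlocks_zero_mulVec]
  simpa using hT.dotProduct_mulVec_nonneg (v ∘ Sum.inr)

theorem posDef_transpose_mul_diagonal_mul_add_fromBlocks_zero [DecidableEq n] [DecidableEq p₁]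
    [DecidableEq p₂] {X₁ : Matrix n p₁ ℝ} (X₂ : Matrix n p₂ ℝ)
    (hX₁ : Function.Injective X₁.mulVec) {w : n → ℝ} (hw : ∀ j, 0 < w j)
    {T : Matrix p₂ p₂ ℝ} (hT : T.PosDef) :
    ((fromCols X₁ X₂)ᵀ * diagonal w * fromCols X₁ X₂ + fromBlocks 0 0 0 T).PosDef := by
  set X := fromCols X₁ X₂
  have hgram : (Xᵀ * diagonal w * X).PosSemidef := by
    simpa using (PosSemidef.diagonal fun j => (hw j).le).conjTranspose_mul_mul_same X
  refine .of_dotProduct_mulVec_pos (hgram.add hT.posSemidef.fromBlocks_zero_s1).isHermitian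
    fun v hv => ?_
  have hgram_nonneg := hgram.dotProduct_mulVec_nonneg v
  rw [star_trivial] at hgram_nonneg
  rw [star_trivial, add_mulVec, dotProduct_add, dotProduct_fromBlocks_zero_mulVec]
  by_cases hv₂ : v ∘ Sum.inr = 0
  · have hv₁ : v ∘ Sum.inl ≠ 0 := fun hv₁ =>
      hv (by ext (k | k); exacts [congrFun hv₁ k, congrFun hv₂ k])
    have hXv : X *ᵥ v ≠ 0 := by
      simpa [X, hv₂] using hX₁.ne (a₂ := 0) hv₁
    have hpos := (PosDef.diagonal hw).dotProduct_mulVec_pos hXv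
    rw [star_trivial, ← dotProduct_transpose_mul_mul_mulVec] at hpos
    simp [hv₂, hpos]
  · have := hT.dotProduct_mulVec_pos hv₂
    rw [star_trivial] at this
    exact add_pos_of_nonneg_of_pos hgram_nonneg this

section hatMatrix

variable {R : Type*} [CommRing R] [DecidableEq p]

noncomputable def hatMatrix (X : Matrix n p R) (D : Matrix n n R) (C : Matrix p p R) :
    Matrix n n R :=
  X * (Xᵀ * D * X + C)⁻¹ * Xᵀ * D

theorem hatMatrix_mulVec_mulVec {X : Matrix n p R} {D : Matrix n n R} {C : Matrix p p R}
    (hM : IsUnit (Xᵀ * D * X + C).det) {u : p → R} (hu : C *ᵥ u = 0) :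
    hatMatrix X D C *ᵥ (X *ᵥ u) = X *ᵥ u := by
  have hMu : (Xᵀ * D * X + C) *ᵥ u = (Xᵀ * D) *ᵥ (X *ᵥ u) := by
    rw [add_mulVec, hu, add_zero, mulVec_mulVec]
  calc hatMatrix X D C *ᵥ (X *ᵥ u)
      = X *ᵥ ((Xᵀ * D * X + C)⁻¹ *ᵥ ((Xᵀ * D) *ᵥ (X *ᵥ u))) := by
        simp only [hatMatrix, mulVec_mulVec, Matrix.mul_assoc]
    _ = X *ᵥ u := by rw [← hMu, mulVec_mulVec u, nonsing_inv_mul _ hM, one_mulVec]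

theorem sum_hatMatrix_apply_eq_one {X : Matrix n p R} {D : Matrix n n R} {C : Matrix p p R}
    (hM : IsUnit (Xᵀ * D * X + C).det) {u : p → R} (hu : C *ᵥ u = 0) (hXu : X *ᵥ u = 1)
    (i : n) :
    ∑ j, hatMatrix X D C i j = 1 := by
  have h := congrFun (hatMatrix_mulVec_mulVec hM hu) i
  rw [hXu] at h
  simpa [mulVec, dotProduct] using h

variable [DecidableEq n]

theorem hatMatrix_diagonal_apply (X : Matrix n p R) (w : n → R) (C : Matrix p p R) (i j : n) :
    hatMatrix X (diagonal w) C i j = (X i ⬝ᵥ (Xᵀ * diagonal w * X + C)⁻¹ *ᵥ X j) * w j := by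
  rw [hatMatrix, mul_diagonal, Matrix.mul_assoc X, mul_apply]
  simp only [mul_apply, dotProduct, mulVec, transpose_apply, Finset.mul_sum]

theorem sum_hatMatrix_diagonal_apply_of_rows_eq {X : Matrix n p R} {w : n → R}
    {C : Matrix p p R} {B : Finset n} {i : n} (hB : ∀ j ∈ B, X j = X i) :
    ∑ j ∈ B, hatMatrix X (diagonal w) C i j
      = (X i ⬝ᵥ (Xᵀ * diagonal w * X + C)⁻¹ *ᵥ X i) * ∑ j ∈ B, w j := by
  rw [Finset.mul_sum]
  exact Finset.sum_congr rfl fun j hj => by rw [hatMatrix_diagonal_apply, hB j hj]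

end hatMatrix

section shrinkage

variable [DecidableEq n] [DecidableEq p] {X : Matrix n p ℝ} {w : n → ℝ} {C : Matrix p p ℝ}
  {B : Finset n} {i : n}

theorem sum_mul_sq_dotProduct_inv_mulVec_le (hw : ∀ j, 0 ≤ w j) (hC : C.PosSemidef)
    (hM : IsUnit (Xᵀ * diagonal w * X + C).det) (hB : ∀ j ∈ B, X j = X i) :
    (∑ j ∈ B, w j) * (X i ⬝ᵥ (Xᵀ * diagonal w * X + C)⁻¹ *ᵥ X i) ^ 2
      ≤ X i ⬝ᵥ (Xᵀ * diagonal w * X + C)⁻¹ *ᵥ X i := by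
  set M := Xᵀ * diagonal w * X + C
  set v := M⁻¹ *ᵥ X i
  have hMv : M *ᵥ v = X i := by rw [mulVec_mulVec, mul_nonsing_inv _ hM, one_mulVec]
  have hXv : ∀ j ∈ B, (X *ᵥ v) j = X i ⬝ᵥ v := fun j hj => by rw [← hB j hj]; rfl
  calc (∑ j ∈ B, w j) * (X i ⬝ᵥ v) ^ 2 = ∑ j ∈ B, w j * (X *ᵥ v) j ^ 2 := by
        rw [Finset.sum_mul]
        exact Finset.sum_congr rfl fun j hj => by rw [hXv j hj]
    _ ≤ ∑ j, w j * (X *ᵥ v) j ^ 2 :=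
        Finset.sum_le_sum_of_subset_of_nonneg (Finset.subset_univ B) fun j _ _ =>
          mul_nonneg (hw j) (sq_nonneg _)
    _ = v ⬝ᵥ ((Xᵀ * diagonal w * X) *ᵥ v) := by
        rw [dotProduct_transpose_mul_mul_mulVec, dotProduct]
        exact Finset.sum_congr rfl fun j _ => by rw [mulVec_diagonal]; ring
    _ ≤ v ⬝ᵥ (M *ᵥ v) := by
        rw [add_mulVec, dotProduct_add, le_add_iff_nonneg_right]
        simpa using hC.dotProduct_mulVec_nonneg v
    _ = X i ⬝ᵥ v := by rw [hMv, dotProduct_comm]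

theorem sum_hatMatrix_diagonal_apply_le_one (hw : ∀ j, 0 ≤ w j) (hC : C.PosSemidef)
    (hM : (Xᵀ * diagonal w * X + C).PosDef) (hB : ∀ j ∈ B, X j = X i) :
    ∑ j ∈ B, hatMatrix X (diagonal w) C i j ≤ 1 := by
  have hkey := sum_mul_sq_dotProduct_inv_mulVec_le hw hC
    ((isUnit_iff_isUnit_det _).1 hM.isUnit) hB
  have hq : 0 ≤ X i ⬝ᵥ (Xᵀ * diagonal w * X + C)⁻¹ *ᵥ X i := by
    simpa using hM.inv.posSemidef.dotProduct_mulVec_nonneg (X i)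
  rw [sum_hatMatrix_diagonal_apply_of_rows_eq hB]
  rcases hq.eq_or_lt with hq | hq
  · rw [← hq, zero_mul]
    exact zero_le_one
  · nlinarith

theorem sum_hatMatrix_diagonal_apply_pos (hw : ∀ j, 0 < w j)
    (hM : (Xᵀ * diagonal w * X + C).PosDef) (hXi : X i ≠ 0) (hi : i ∈ B)
    (hB : ∀ j ∈ B, X j = X i) :
    0 < ∑ j ∈ B, hatMatrix X (diagonal w) C i j := by
  rw [sum_hatMatrix_diagonal_apply_of_rows_eq hB]
  exact mul_pos (by simpa using hM.inv.dotProduct_mulVec_pos hXi)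
    (Finset.sum_pos (fun j _ => hw j) ⟨i, hi⟩)

end shrinkage

end Matrix

open scoped Classical in
theorem stmt_1_general (N P₁ P₂ : ℕ)
    (X₁ : Matrix (Fin N) (Fin P₁) ℝ) (X₂ : Matrix (Fin N) (Fin P₂) ℝ)
    (hX₁ : LinearIndependent ℝ X₁ᵀ)
    (d : Fin N → ℝ) (hd : ∀ i, 0 < d i)
    (S : Matrix (Fin P₂) (Fin P₂) ℝ) (hS : S.PosDef)
    (hones : ∃ a : Fin P₁ → ℝ, X₁ *ᵥ a = fun _ => (1 : ℝ))
    (i : Fin N) :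
    let Φ : Matrix (Fin N) (Fin N) ℝ := Matrix.diagonal d
    let X : Matrix (Fin N) (Fin P₁ ⊕ Fin P₂) ℝ := Matrix.fromCols X₁ X₂
    let V : Matrix (Fin P₁ ⊕ Fin P₂) (Fin P₁ ⊕ Fin P₂) ℝ :=
      (Xᵀ * Φ⁻¹ * X + Matrix.fromBlocks 0 0 0 S⁻¹)⁻¹
    let W : Matrix (Fin N) (Fin N) ℝ := X * V * Xᵀ * Φ⁻¹
    -- the borrower cluster: indices with the same covariate row and the same noise variance
    let B : Finset (Fin N) := Finset.univ.filter (fun j => (∀ k, X j k = X i k) ∧ d j = d i)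
    -- shrinkage factor
    let bB : ℝ := ∑ j ∈ B, W i j
    -- pooling factor (sum over the lenders, the complement of the borrower cluster)
    let bL : ℝ := ∑ j ∈ Bᶜ, W i j
    0 < bB ∧ bB ≤ 1 ∧ 0 ≤ bL ∧ bL < 1 ∧ bL = 1 - bB := by
  intro Φ X V W B bB bL
  obtain ⟨a, ha⟩ := hones
  have hw : ∀ j, 0 < d⁻¹ j := fun j => inv_pos.2 (hd j)
  have hΦ : Φ⁻¹ = diagonal d⁻¹ := inv_eq_left_inv (by
    rw [diagonal_mul_diagonal, ← diagonal_one]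
    exact congrArg diagonal (funext fun j => inv_mul_cancel₀ (hd j).ne'))
  have hW : W = hatMatrix X (diagonal d⁻¹) (fromBlocks 0 0 0 S⁻¹) := by
    simp only [W, V, hΦ, hatMatrix]
  have hM := posDef_transpose_mul_diagonal_mul_add_fromBlocks_zero X₂
    (mulVec_injective_iff.2 hX₁) hw hS.inv
  have hXu : X *ᵥ Sum.elim a 0 = 1 := by
    rw [fromCols_mulVec_sumElim, ha, mulVec_zero, add_zero]
    rfl
  have hXi : X i ≠ 0 := fun h => by simpa [mulVec, h] using congrFun hXu i
  have hBrows : ∀ j ∈ B, X j = X i := fun j hj => funext (Finset.mem_filter.1 hj).2.1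
  have hiB : i ∈ B := by simp [B]
  have hrow : bB + bL = 1 := by
    rw [Finset.sum_add_sum_compl, hW]
    exact sum_hatMatrix_apply_eq_one ((isUnit_iff_isUnit_det _).1 hM.isUnit)
      (by simp [fromBlocks_mulVec]) hXu i
  have hpos : 0 < bB := by
    simp only [bB, hW]
    exact sum_hatMatrix_diagonal_apply_pos hw hM hXi hiB hBrows
  have hle : bB ≤ 1 := by
    simp only [bB, hW]
    exact sum_hatMatrix_diagonal_apply_le_one (fun j => (hw j).le)
      hS.inv.posSemidef.fromBlocks_zero_s1 hM hBrows
  exact ⟨hpos, hle, by linarith, by linarith, by linarith⟩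

open scoped Classical in
/-- If the vector of ones lies in the column span of `X₁`, then for any index `i`
the shrinkage factor `b_{iBᵢ}` satisfies `0 < b_{iBᵢ} ≤ 1`, the pooling factor `b_{iLᵢ}`
satisfies `0 ≤ b_{iLᵢ} < 1`, and `b_{iLᵢ} = 1 - b_{iBᵢ}`. -/
theorem stmt_1 (N P₁ P₂ : ℕ) (hN : 0 < N) (hP₁ : 0 < P₁) (hP₂ : 0 < P₂)
    (X₁ : Matrix (Fin N) (Fin P₁) ℝ) (X₂ : Matrix (Fin N) (Fin P₂) ℝ)
    (hX₁ : LinearIndependent ℝ X₁ᵀ)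
    (d : Fin N → ℝ) (hd : ∀ i, 0 < d i)
    (S : Matrix (Fin P₂) (Fin P₂) ℝ) (hS : S.PosDef)
    (hones : ∃ a : Fin P₁ → ℝ, X₁ *ᵥ a = fun _ => (1 : ℝ))
    (i : Fin N) :
    let Φ : Matrix (Fin N) (Fin N) ℝ := Matrix.diagonal d
    let X : Matrix (Fin N) (Fin P₁ ⊕ Fin P₂) ℝ := Matrix.fromCols X₁ X₂
    let V : Matrix (Fin P₁ ⊕ Fin P₂) (Fin P₁ ⊕ Fin P₂) ℝ :=
      (Xᵀ * Φ⁻¹ * X + Matrix.fromBlocks 0 0 0 S⁻¹)⁻¹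
    let W : Matrix (Fin N) (Fin N) ℝ := X * V * Xᵀ * Φ⁻¹
    -- the borrower cluster: indices with the same covariate row and the same noise variance
    let B : Finset (Fin N) := Finset.univ.filter (fun j => (∀ k, X j k = X i k) ∧ d j = d i)
    -- shrinkage factor
    let bB : ℝ := ∑ j ∈ B, W i j
    -- pooling factor (sum over the lenders, the complement of the borrower cluster)
    let bL : ℝ := ∑ j ∈ Bᶜ, W i j
    0 < bB ∧ bB ≤ 1 ∧ 0 ≤ bL ∧ bL < 1 ∧ bL = 1 - bB :=
  stmt_1_general N P₁ P₂ X₁ X₂ hX₁ d hd S hS hones i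
end

section
/- With M = (X₂ᵀ Φ⁻¹ X₂ + Σ⁻¹)⁻¹, H₂ = X₂ M X₂ᵀ Φ⁻¹, Φ̃⁻¹ = Φ⁻¹(I_N − H₂), and H = X₁ (X₁ᵀ Φ̃⁻¹ X₁)⁻¹ X₁ᵀ Φ̃⁻¹ (the matrix X₁ᵀ Φ̃⁻¹ X₁ is invertible since X₁ has linearly independent columns and Φ̃ = Φ + X₂ Σ X₂ᵀ is positive definite), the weight matrix decomposes as W = H + H₂ (I_N − H), equivalently W = (I_N − H₂) H + H₂. -/
/-!
Write the regularised Gram matrix `XᵀΦ⁻¹X + blockDiag(0, Σ⁻¹)` in `2 × 2` block form and invert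
it through the Schur complement of its lower-right block `X₂ᵀΦ⁻¹X₂ + Σ⁻¹ = M⁻¹`. That Schur
complement is `X₁ᵀΦ̃⁻¹X₁`, and multiplying the block inverse out between `X` and `XᵀΦ⁻¹` gives
`W = (I − H₂) H + H₂`, which rearranges to `H + H₂ (I − H)`. Invertibility of the Schur complement
comes from the Woodbury identity `Φ̃⁻¹ = (Φ + X₂ Σ X₂ᵀ)⁻¹`: this matrix is positive definite, hence
so is its congruence by the injective `X₁`.
-/

open Matrix

namespace Matrix

variable {l m n α : Type*} [CommRing α]

theorem transpose_fromCols_mul_mul_fromCols [Fintype l] (X₁ : Matrix l m α)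
    (X₂ : Matrix l n α) (Q : Matrix l l α) :
    (fromCols X₁ X₂)ᵀ * Q * fromCols X₁ X₂ =
      fromBlocks (X₁ᵀ * Q * X₁) (X₁ᵀ * Q * X₂) (X₂ᵀ * Q * X₁) (X₂ᵀ * Q * X₂) := by
  rw [transpose_fromCols, fromRows_mul, fromRows_mul_fromCols]

section Invertible

variable [Fintype l] [Fintype m] [Fintype n] [DecidableEq l] [DecidableEq m] [DecidableEq n]

theorem inv_fromBlocks_of_isUnit₂₂ (A : Matrix m m α) (B : Matrix m n α) (C : Matrix n m α)
    (D : Matrix n n α) (hD : IsUnit D) (hA : IsUnit (A - B * D⁻¹ * C)) :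
    (fromBlocks A B C D)⁻¹ =
      fromBlocks (A - B * D⁻¹ * C)⁻¹ (-((A - B * D⁻¹ * C)⁻¹ * B * D⁻¹))
        (-(D⁻¹ * C * (A - B * D⁻¹ * C)⁻¹))
        (D⁻¹ + D⁻¹ * C * (A - B * D⁻¹ * C)⁻¹ * B * D⁻¹) := by
  obtain ⟨_⟩ := hD.nonempty_invertible
  simp only [← invOf_eq_nonsing_inv] at hA
  obtain ⟨_⟩ := hA.nonempty_invertible
  let := fromBlocks₂₂Invertible A B C D
  simp only [← invOf_eq_nonsing_inv]
  exact invOf_fromBlocks₂₂_eq A B C D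

theorem inv_add_mul_mul_transpose {Φ : Matrix l l α} {S : Matrix n n α} (X : Matrix l n α)
    (hΦ : IsUnit Φ) (hS : IsUnit S) (h : IsUnit (Xᵀ * Φ⁻¹ * X + S⁻¹)) :
    (Φ + X * S * Xᵀ)⁻¹ = Φ⁻¹ * (1 - X * (Xᵀ * Φ⁻¹ * X + S⁻¹)⁻¹ * Xᵀ * Φ⁻¹) := by
  rw [add_mul_mul_inv_eq_sub _ _ _ _ hΦ hS (by rwa [add_comm]), add_comm S⁻¹]
  simp only [Matrix.mul_sub, Matrix.mul_one, Matrix.mul_assoc]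

theorem fromCols_mul_inv_mul_transpose (X₁ : Matrix l m α) (X₂ : Matrix l n α)
    (Q : Matrix l l α) (R : Matrix n n α) (hD : IsUnit (X₂ᵀ * Q * X₂ + R))
    (hK : IsUnit (X₁ᵀ * (Q * (1 - X₂ * (X₂ᵀ * Q * X₂ + R)⁻¹ * X₂ᵀ * Q)) * X₁)) :
    fromCols X₁ X₂ * ((fromCols X₁ X₂)ᵀ * Q * fromCols X₁ X₂ + fromBlocks 0 0 0 R)⁻¹ *
        (fromCols X₁ X₂)ᵀ * Q =
      (1 - X₂ * (X₂ᵀ * Q * X₂ + R)⁻¹ * X₂ᵀ * Q) *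
          (X₁ * (X₁ᵀ * (Q * (1 - X₂ * (X₂ᵀ * Q * X₂ + R)⁻¹ * X₂ᵀ * Q)) * X₁)⁻¹ * X₁ᵀ *
            (Q * (1 - X₂ * (X₂ᵀ * Q * X₂ + R)⁻¹ * X₂ᵀ * Q))) +
        X₂ * (X₂ᵀ * Q * X₂ + R)⁻¹ * X₂ᵀ * Q := by
  have hschur : X₁ᵀ * Q * X₁ - X₁ᵀ * Q * X₂ * (X₂ᵀ * Q * X₂ + R)⁻¹ * (X₂ᵀ * Q * X₁) =
      X₁ᵀ * (Q * (1 - X₂ * (X₂ᵀ * Q * X₂ + R)⁻¹ * X₂ᵀ * Q)) * X₁ := by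
    simp only [Matrix.mul_sub, Matrix.sub_mul, Matrix.mul_one, Matrix.mul_assoc]
  rw [transpose_fromCols_mul_mul_fromCols, fromBlocks_add, add_zero, add_zero, add_zero,
    inv_fromBlocks_of_isUnit₂₂ _ _ _ _ hD (by rwa [hschur]), hschur, transpose_fromCols,
    fromCols_mul_fromBlocks, fromCols_mul_fromRows]
  generalize (X₂ᵀ * Q * X₂ + R)⁻¹ = M
  generalize (X₁ᵀ * (Q * (1 - X₂ * M * X₂ᵀ * Q)) * X₁)⁻¹ = K
  simp only [Matrix.mul_sub, Matrix.sub_mul, Matrix.mul_add, Matrix.add_mul, Matrix.mul_one,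
    Matrix.one_mul, Matrix.neg_mul, Matrix.mul_neg, Matrix.mul_assoc]
  abel

end Invertible

theorem PosDef.transpose_mul_mul_same [Fintype l] [Fintype m] {Q : Matrix l l ℝ}
    (hQ : Q.PosDef) {X : Matrix l m ℝ} (hX : LinearIndependent ℝ Xᵀ) : (Xᵀ * Q * X).PosDef := by
  simpa using hQ.conjTranspose_mul_mul_same (mulVec_injective_iff.mpr hX)

end Matrix

theorem stmt_2_general (N P₁ P₂ : ℕ)
    (X₁ : Matrix (Fin N) (Fin P₁) ℝ) (X₂ : Matrix (Fin N) (Fin P₂) ℝ)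
    (hX₁ : LinearIndependent ℝ X₁ᵀ)
    (d : Fin N → ℝ) (hd : ∀ i, 0 < d i)
    (S : Matrix (Fin P₂) (Fin P₂) ℝ) (hS : S.PosDef) :
    let Φ : Matrix (Fin N) (Fin N) ℝ := Matrix.diagonal d
    let X : Matrix (Fin N) (Fin P₁ ⊕ Fin P₂) ℝ := Matrix.fromCols X₁ X₂
    let V : Matrix (Fin P₁ ⊕ Fin P₂) (Fin P₁ ⊕ Fin P₂) ℝ :=
      (Xᵀ * Φ⁻¹ * X + Matrix.fromBlocks 0 0 0 S⁻¹)⁻¹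
    let W : Matrix (Fin N) (Fin N) ℝ := X * V * Xᵀ * Φ⁻¹
    let M : Matrix (Fin P₂) (Fin P₂) ℝ := (X₂ᵀ * Φ⁻¹ * X₂ + S⁻¹)⁻¹
    let H₂ : Matrix (Fin N) (Fin N) ℝ := X₂ * M * X₂ᵀ * Φ⁻¹
    let Φtinv : Matrix (Fin N) (Fin N) ℝ := Φ⁻¹ * (1 - H₂)
    let H : Matrix (Fin N) (Fin N) ℝ := X₁ * (X₁ᵀ * Φtinv * X₁)⁻¹ * X₁ᵀ * Φtinv
    W = H + H₂ * (1 - H) ∧ W = (1 - H₂) * H + H₂ := by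
  intro Φ X V W M H₂ Φtinv H
  have hΦ : Φ.PosDef := .diagonal hd
  have hD : (X₂ᵀ * Φ⁻¹ * X₂ + S⁻¹).PosDef := by
    simpa using PosDef.posSemidef_add (hΦ.inv.posSemidef.conjTranspose_mul_mul_same X₂) hS.inv
  have hΦt : (Φ + X₂ * S * X₂ᵀ)⁻¹ = Φtinv :=
    inv_add_mul_mul_transpose X₂ hΦ.isUnit hS.isUnit hD.isUnit
  have hK : (X₁ᵀ * Φtinv * X₁).PosDef := by
    rw [← hΦt]
    refine (hΦ.add_posSemidef ?_).inv.transpose_mul_mul_same hX₁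
    simpa using hS.posSemidef.mul_mul_conjTranspose_same X₂
  have hW : W = (1 - H₂) * H + H₂ :=
    fromCols_mul_inv_mul_transpose X₁ X₂ Φ⁻¹ S⁻¹ hD.isUnit hK.isUnit
  exact ⟨hW.trans (by noncomm_ring), hW⟩

/-- With `M = (X₂ᵀ Φ⁻¹ X₂ + Σ⁻¹)⁻¹`, `H₂ = X₂ M X₂ᵀ Φ⁻¹`,
`Φ̃⁻¹ = Φ⁻¹ (I − H₂)` and `H = X₁ (X₁ᵀ Φ̃⁻¹ X₁)⁻¹ X₁ᵀ Φ̃⁻¹`, the weight matrix decomposes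
as `W = H + H₂ (I − H)`, equivalently `W = (I − H₂) H + H₂`. -/
theorem stmt_2 (N P₁ P₂ : ℕ) (hN : 0 < N) (hP₁ : 0 < P₁) (hP₂ : 0 < P₂)
    (X₁ : Matrix (Fin N) (Fin P₁) ℝ) (X₂ : Matrix (Fin N) (Fin P₂) ℝ)
    (hX₁ : LinearIndependent ℝ X₁ᵀ)
    (d : Fin N → ℝ) (hd : ∀ i, 0 < d i)
    (S : Matrix (Fin P₂) (Fin P₂) ℝ) (hS : S.PosDef) :
    let Φ : Matrix (Fin N) (Fin N) ℝ := Matrix.diagonal d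
    let X : Matrix (Fin N) (Fin P₁ ⊕ Fin P₂) ℝ := Matrix.fromCols X₁ X₂
    let V : Matrix (Fin P₁ ⊕ Fin P₂) (Fin P₁ ⊕ Fin P₂) ℝ :=
      (Xᵀ * Φ⁻¹ * X + Matrix.fromBlocks 0 0 0 S⁻¹)⁻¹
    let W : Matrix (Fin N) (Fin N) ℝ := X * V * Xᵀ * Φ⁻¹
    let M : Matrix (Fin P₂) (Fin P₂) ℝ := (X₂ᵀ * Φ⁻¹ * X₂ + S⁻¹)⁻¹
    let H₂ : Matrix (Fin N) (Fin N) ℝ := X₂ * M * X₂ᵀ * Φ⁻¹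
    let Φtinv : Matrix (Fin N) (Fin N) ℝ := Φ⁻¹ * (1 - H₂)
    let H : Matrix (Fin N) (Fin N) ℝ := X₁ * (X₁ᵀ * Φtinv * X₁)⁻¹ * X₁ᵀ * Φtinv
    W = H + H₂ * (1 - H) ∧ W = (1 - H₂) * H + H₂ :=
  stmt_2_general N P₁ P₂ X₁ X₂ hX₁ d hd S hS
end

section
/- In the one-way design, for every Y ∈ ℝᴺ and every cluster i ∈ {1,…,J}, the fitted value for cluster i satisfies xᵢᵀ V Xᵀ Φ⁻¹ Y = (nᵢσ²/(nᵢσ² + φᵢ²) + ρ_{ii}) Ȳᵢ + Σ_{j≠i} ρ_{ij} Ȳⱼ, where ρ_{ij} = (φᵢ²/(nᵢσ² + φᵢ²)) · (τⱼ / Σ_{k=1}^{J} τ_k) and xᵢᵀ = (1, eᵢᵀ) is the row of X common to observations in cluster i (eᵢ the i-th standard basis vector of ℝᴶ). -/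
/-!
Write `a_j = n_j / φ_j²`, `λ_j = n_j σ² / (n_j σ² + φ_j²)` and `μ = Σ τ_j Ȳ_j / Σ τ_j`.
The matrix `A = Xᵀ Φ⁻¹ X + blockDiag(0, σ⁻² I)` acts by
`(A v)₀ = Σ_j a_j (v₀ + v_j)` and `(A v)_j = a_j (v₀ + v_j) + v_j / σ²`, so its quadratic form
`Σ_j a_j (v₀ + v_j)² + σ⁻² Σ_j v_j²` vanishes only at `v = 0` and `A` is invertible.
Because `a_j (1 - λ_j) = τ_j = λ_j / σ²`, the vector `w = (μ, λ_j (Ȳ_j - μ))` solves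
`A w = Xᵀ Φ⁻¹ Y`; the `0`-th equation is exactly the definition of `μ`. Hence the fitted value
for cluster `i` is `μ + λ_i (Ȳ_i - μ) = λ_i Ȳ_i + (1 - λ_i) μ`, and `(1 - λ_i) μ = Σ_j ρ_{ij} Ȳ_j`.
-/

open Matrix

lemma inv_diagonal_mulVec {K α : Type*} [Field K] [Fintype α] [DecidableEq α] {d : α → K}
    (hd : ∀ a, d a ≠ 0) (u : α → K) :
    (diagonal d)⁻¹ *ᵥ u = fun a => u a / d a := by
  rw [inv_eq_right_inv (B := diagonal fun a => (d a)⁻¹) (by simp [diagonal_mul_diagonal, hd])]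
  funext a
  rw [mulVec_diagonal, div_eq_inv_mul]

namespace OneWay

variable {ι : Type*}

section Statistics

variable (n : ι → ℕ) (φ : ι → ℝ) (σ : ℝ)

noncomputable def clusterMean {n : ι → ℕ} (Y : (j : ι) × Fin (n j) → ℝ) (j : ι) : ℝ :=
  (∑ k, Y ⟨j, k⟩) / n j

noncomputable def clusterWeight (j : ι) : ℝ :=
  n j / (n j * σ ^ 2 + φ j ^ 2)

noncomputable def shrinkage (j : ι) : ℝ :=
  n j * σ ^ 2 / (n j * σ ^ 2 + φ j ^ 2)

variable [Fintype ι]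

noncomputable def grandMean (Y : (j : ι) × Fin (n j) → ℝ) : ℝ :=
  (∑ j, clusterWeight n φ σ j * clusterMean Y j) / ∑ j, clusterWeight n φ σ j

noncomputable def glsCoeffs (Y : (j : ι) × Fin (n j) → ℝ) : Fin 1 ⊕ ι → ℝ :=
  Sum.elim (fun _ => grandMean n φ σ Y)
    (fun j => shrinkage n φ σ j * (clusterMean Y j - grandMean n φ σ Y))

noncomputable def crossWeight (i j : ι) : ℝ :=
  φ i ^ 2 / (n i * σ ^ 2 + φ i ^ 2) * (clusterWeight n φ σ j / ∑ k, clusterWeight n φ σ k)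

end Statistics

variable {n : ι → ℕ} {φ : ι → ℝ} {σ : ℝ}

lemma sum_eq_mul_clusterMean (Y : (j : ι) × Fin (n j) → ℝ) (j : ι) :
    ∑ k, Y ⟨j, k⟩ = n j * clusterMean Y j := by
  rw [clusterMean, mul_comm, div_mul_cancel_of_imp]
  intro h
  have : IsEmpty (Fin (n j)) := by rw [Nat.cast_eq_zero.mp h]; infer_instance
  exact Finset.sum_of_isEmpty _

lemma shrinkage_div_sq (hσ : σ ≠ 0) (j : ι) :
    shrinkage n φ σ j / σ ^ 2 = clusterWeight n φ σ j := by
  rw [shrinkage, clusterWeight, div_right_comm, mul_div_cancel_right₀ _ (pow_ne_zero 2 hσ)]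

lemma one_sub_shrinkage {j : ι} (hφ : φ j ≠ 0) :
    1 - shrinkage n φ σ j = φ j ^ 2 / (n j * σ ^ 2 + φ j ^ 2) := by
  rw [shrinkage, one_sub_div (by positivity), add_sub_cancel_left]

lemma mul_one_sub_shrinkage {j : ι} (hφ : φ j ≠ 0) :
    n j / φ j ^ 2 * (1 - shrinkage n φ σ j) = clusterWeight n φ σ j := by
  rw [one_sub_shrinkage hφ, clusterWeight, div_mul_div_comm, mul_comm (φ j ^ 2),
    mul_div_mul_right _ _ (pow_ne_zero 2 hφ)]

section Sums

variable [Fintype ι]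

lemma sum_clusterWeight_pos {i : ι} (hφ : φ i ≠ 0) (hi : n i ≠ 0) :
    0 < ∑ j, clusterWeight n φ σ j :=
  Finset.sum_pos' (fun j _ => by unfold clusterWeight; positivity)
    ⟨i, Finset.mem_univ i, div_pos (Nat.cast_pos.mpr (Nat.pos_of_ne_zero hi)) (by positivity)⟩

lemma sum_clusterWeight_mul_sub_grandMean (hS : ∑ j, clusterWeight n φ σ j ≠ 0)
    (Y : (j : ι) × Fin (n j) → ℝ) :
    ∑ j, clusterWeight n φ σ j * (clusterMean Y j - grandMean n φ σ Y) = 0 := by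
  simp only [mul_sub, Finset.sum_sub_distrib, ← Finset.sum_mul, grandMean, mul_div_cancel₀ _ hS,
    sub_self]

lemma sum_crossWeight_mul_clusterMean (i : ι) (Y : (j : ι) × Fin (n j) → ℝ) :
    ∑ j, crossWeight n φ σ i j * clusterMean Y j =
      φ i ^ 2 / (n i * σ ^ 2 + φ i ^ 2) * grandMean n φ σ Y := by
  simp only [crossWeight, grandMean, mul_assoc, div_mul_eq_mul_div, ← Finset.sum_div,
    ← Finset.mul_sum]

variable [DecidableEq ι]

lemma clusterRow_dotProduct_glsCoeffs {i : ι} (hφ : φ i ≠ 0) (Y : (j : ι) × Fin (n j) → ℝ) :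
    Sum.elim (fun _ => 1) (fun j => if j = i then 1 else 0) ⬝ᵥ glsCoeffs n φ σ Y =
      (shrinkage n φ σ i + crossWeight n φ σ i i) * clusterMean Y i +
        ∑ j ∈ Finset.univ \ {i}, crossWeight n φ σ i j * clusterMean Y j := by
  rw [Finset.sum_sdiff_eq_sub (Finset.subset_univ _), Finset.sum_singleton,
    sum_crossWeight_mul_clusterMean, ← one_sub_shrinkage hφ]
  simp only [dotProduct, glsCoeffs, Fintype.sum_sum_type, Fin.sum_univ_one, Sum.elim_inl,
    Sum.elim_inr, one_mul, ite_mul, zero_mul, Finset.sum_ite_eq', Finset.mem_univ, if_true]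
  ring

end Sums

section Design

variable [Fintype ι] [DecidableEq ι]

def design (n : ι → ℕ) : Matrix ((j : ι) × Fin (n j)) (Fin 1 ⊕ ι) ℝ :=
  fromCols (of fun _ _ => 1) (of fun m j => if m.1 = j then 1 else 0)

noncomputable def precision (n : ι → ℕ) (φ : ι → ℝ) (σ : ℝ) :
    Matrix (Fin 1 ⊕ ι) (Fin 1 ⊕ ι) ℝ :=
  (design n)ᵀ * (diagonal fun m : (j : ι) × Fin (n j) => φ m.1 ^ 2)⁻¹ * design n +
    fromBlocks 0 0 0 ((σ ^ 2)⁻¹ • (1 : Matrix ι ι ℝ))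

lemma design_mulVec (v : Fin 1 ⊕ ι → ℝ) (m : (j : ι) × Fin (n j)) :
    (design n *ᵥ v) m = v (.inl 0) + v (.inr m.1) := by
  simp [design, mulVec, dotProduct, fromCols_apply_inl, fromCols_apply_inr]

lemma design_transpose_mulVec (u : (j : ι) × Fin (n j) → ℝ) :
    (design n)ᵀ *ᵥ u = Sum.elim (fun _ => ∑ j, ∑ k, u ⟨j, k⟩) (fun j => ∑ k, u ⟨j, k⟩) := by
  funext s
  rcases s with a | j
  · simp [design, mulVec, dotProduct, Fintype.sum_sigma, fromCols_apply_inl]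
  · simp only [design, mulVec, dotProduct, Fintype.sum_sigma, transpose_apply, fromCols_apply_inr,
      of_apply, Sum.elim_inr, ite_mul, one_mul, zero_mul]
    rw [Fintype.sum_eq_single j fun x hx => by simp [hx]]
    simp

lemma precision_mulVec (hφ : ∀ j, φ j ≠ 0) (v : Fin 1 ⊕ ι → ℝ) :
    precision n φ σ *ᵥ v =
      Sum.elim (fun _ => ∑ j, n j / φ j ^ 2 * (v (.inl 0) + v (.inr j)))
        (fun j => n j / φ j ^ 2 * (v (.inl 0) + v (.inr j)) + v (.inr j) / σ ^ 2) := by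
  have hXv : design n *ᵥ v = fun m => v (.inl 0) + v (.inr m.1) := funext (design_mulVec v)
  rw [precision, add_mulVec, ← mulVec_mulVec, ← mulVec_mulVec, hXv,
    inv_diagonal_mulVec (d := fun m : (j : ι) × Fin (n j) => φ m.1 ^ 2)
      (fun m => pow_ne_zero 2 (hφ m.1)), design_transpose_mulVec, fromBlocks_mulVec]
  funext s
  rcases s with a | j
  · simp [mul_div_assoc', div_mul_eq_mul_div]
  · simp [div_eq_inv_mul, smul_mulVec, mul_comm, mul_assoc]

lemma dotProduct_precision_mulVec (hφ : ∀ j, φ j ≠ 0) (v : Fin 1 ⊕ ι → ℝ) :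
    v ⬝ᵥ (precision n φ σ *ᵥ v) =
      ∑ j, n j / φ j ^ 2 * (v (.inl 0) + v (.inr j)) ^ 2 + ∑ j, v (.inr j) ^ 2 / σ ^ 2 := by
  rw [precision_mulVec hφ, dotProduct, Fintype.sum_sum_type, Fin.sum_univ_one, Sum.elim_inl,
    Finset.mul_sum, ← Finset.sum_add_distrib, ← Finset.sum_add_distrib]
  refine Finset.sum_congr rfl fun j _ => ?_
  simp only [Sum.elim_inr]
  ring

lemma eq_zero_of_precision_mulVec_eq_zero (hφ : ∀ j, φ j ≠ 0) (hσ : σ ≠ 0) {i : ι}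
    (hi : n i ≠ 0) {v : Fin 1 ⊕ ι → ℝ} (hv : precision n φ σ *ᵥ v = 0) : v = 0 := by
  have hquad := dotProduct_precision_mulVec (n := n) (σ := σ) hφ v
  rw [hv, dotProduct_zero, eq_comm, add_eq_zero_iff_of_nonneg (by positivity) (by positivity),
    Finset.sum_eq_zero_iff_of_nonneg (fun _ _ => by positivity),
    Finset.sum_eq_zero_iff_of_nonneg (fun _ _ => by positivity)] at hquad
  obtain ⟨hfixed, hrandom⟩ := hquad
  have hrandom' : ∀ j, v (.inr j) = 0 := fun j => by
    simpa [hσ] using hrandom j (Finset.mem_univ j)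
  have hfixed' : v (.inl 0) = 0 := by
    simpa [hrandom', hi, hφ i] using hfixed i (Finset.mem_univ i)
  funext s
  rcases s with a | j
  · rw [Subsingleton.elim a 0, hfixed', Pi.zero_apply]
  · exact hrandom' j

lemma isUnit_precision (hφ : ∀ j, φ j ≠ 0) (hσ : σ ≠ 0) {i : ι} (hi : n i ≠ 0) :
    IsUnit (precision n φ σ) := by
  rw [isUnit_iff_isUnit_det, isUnit_iff_ne_zero, Ne, ← exists_mulVec_eq_zero_iff]
  rintro ⟨v, hv0, hv⟩
  exact hv0 (eq_zero_of_precision_mulVec_eq_zero hφ hσ hi hv)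

lemma precision_mulVec_glsCoeffs (hφ : ∀ j, φ j ≠ 0) (hσ : σ ≠ 0)
    (hS : ∑ j, clusterWeight n φ σ j ≠ 0) (Y : (j : ι) × Fin (n j) → ℝ) :
    precision n φ σ *ᵥ glsCoeffs n φ σ Y =
      (design n)ᵀ *ᵥ ((diagonal fun m : (j : ι) × Fin (n j) => φ m.1 ^ 2)⁻¹ *ᵥ Y) := by
  rw [precision_mulVec hφ, inv_diagonal_mulVec (d := fun m : (j : ι) × Fin (n j) => φ m.1 ^ 2)
    (fun m => pow_ne_zero 2 (hφ m.1)), design_transpose_mulVec]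
  simp only [← Finset.sum_div, sum_eq_mul_clusterMean, glsCoeffs, Sum.elim_inl, Sum.elim_inr]
  have hcluster : ∀ j, n j / φ j ^ 2 * (grandMean n φ σ Y +
        shrinkage n φ σ j * (clusterMean Y j - grandMean n φ σ Y)) =
      n j * clusterMean Y j / φ j ^ 2 -
        clusterWeight n φ σ j * (clusterMean Y j - grandMean n φ σ Y) := fun j => by
    rw [← mul_one_sub_shrinkage (hφ j)]
    ring
  funext s
  rcases s with a | j
  · simp only [Sum.elim_inl, hcluster, Finset.sum_sub_distrib,
      sum_clusterWeight_mul_sub_grandMean hS, sub_zero]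
  · simp only [Sum.elim_inr, hcluster, ← shrinkage_div_sq hσ]
    ring

lemma inv_precision_mul_mulVec (hφ : ∀ j, φ j ≠ 0) (hσ : σ ≠ 0) {i : ι} (hi : n i ≠ 0)
    (hS : ∑ j, clusterWeight n φ σ j ≠ 0) (Y : (j : ι) × Fin (n j) → ℝ) :
    ((precision n φ σ)⁻¹ * (design n)ᵀ * (diagonal fun m : (j : ι) × Fin (n j) => φ m.1 ^ 2)⁻¹)
      *ᵥ Y = glsCoeffs n φ σ Y := by
  rw [← mulVec_mulVec, ← mulVec_mulVec, ← precision_mulVec_glsCoeffs hφ hσ hS, mulVec_mulVec,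
    nonsing_inv_mul _ ((isUnit_precision hφ hσ hi).map detMonoidHom), one_mulVec]

end Design

end OneWay

open OneWay

theorem stmt_7_general (J : ℕ) (n : Fin J → ℕ) (hn : ∀ j, 1 ≤ n j)
    (φ : Fin J → ℝ) (hφ : ∀ j, 0 < φ j) (σ : ℝ) (hσ : 0 < σ)
    (Y : ((j : Fin J) × Fin (n j)) → ℝ) (i : Fin J) :
    let X₁ : Matrix ((j : Fin J) × Fin (n j)) (Fin 1) ℝ := fun _ _ => 1
    let X₂ : Matrix ((j : Fin J) × Fin (n j)) (Fin J) ℝ :=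
      fun m j => if m.1 = j then 1 else 0
    let X : Matrix ((j : Fin J) × Fin (n j)) (Fin 1 ⊕ Fin J) ℝ := Matrix.fromCols X₁ X₂
    let Φ : Matrix ((j : Fin J) × Fin (n j)) ((j : Fin J) × Fin (n j)) ℝ :=
      Matrix.diagonal (fun m => (φ m.1) ^ 2)
    let V : Matrix (Fin 1 ⊕ Fin J) (Fin 1 ⊕ Fin J) ℝ :=
      (Xᵀ * Φ⁻¹ * X +
        Matrix.fromBlocks 0 0 0 ((σ ^ 2)⁻¹ • (1 : Matrix (Fin J) (Fin J) ℝ)))⁻¹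
    let τ : Fin J → ℝ := fun j => (n j : ℝ) / ((n j : ℝ) * σ ^ 2 + (φ j) ^ 2)
    let ρ : Fin J → Fin J → ℝ := fun i' j =>
      ((φ i') ^ 2 / ((n i' : ℝ) * σ ^ 2 + (φ i') ^ 2)) * (τ j / ∑ k, τ k)
    let Ybar : Fin J → ℝ := fun j => (∑ k : Fin (n j), Y ⟨j, k⟩) / (n j : ℝ)
    -- the common row of X for observations in cluster i
    let x : Fin 1 ⊕ Fin J → ℝ := Sum.elim (fun _ => 1) (fun j => if j = i then 1 else 0)
    x ⬝ᵥ ((V * Xᵀ * Φ⁻¹) *ᵥ Y) =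
      ((n i : ℝ) * σ ^ 2 / ((n i : ℝ) * σ ^ 2 + (φ i) ^ 2) + ρ i i) * Ybar i +
        ∑ j ∈ Finset.univ \ {i}, ρ i j * Ybar j := by
  intro X₁ X₂ X Φ V τ ρ Ybar x
  have hφ₀ : ∀ j, φ j ≠ 0 := fun j => (hφ j).ne'
  have hi : n i ≠ 0 := Nat.one_le_iff_ne_zero.mp (hn i)
  have hfit : (V * Xᵀ * Φ⁻¹) *ᵥ Y = glsCoeffs n φ σ Y :=
    inv_precision_mul_mulVec hφ₀ hσ.ne' hi (sum_clusterWeight_pos (hφ₀ i) hi).ne' Y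
  rw [hfit]
  exact clusterRow_dotProduct_glsCoeffs (hφ₀ i) Y

/-- In the one-way design, the fitted value for cluster `i` decomposes as
`xᵢᵀ V Xᵀ Φ⁻¹ Y = (nᵢσ²/(nᵢσ² + φᵢ²) + ρ_{ii}) Ȳᵢ + Σ_{j≠i} ρ_{ij} Ȳⱼ` with
`ρ_{ij} = (φᵢ²/(nᵢσ² + φᵢ²)) (τⱼ / Σₖ τₖ)` and `τⱼ = nⱼ/(nⱼσ² + φⱼ²)`. -/
theorem stmt_7 (J : ℕ) (hJ : 0 < J) (n : Fin J → ℕ) (hn : ∀ j, 1 ≤ n j)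
    (φ : Fin J → ℝ) (hφ : ∀ j, 0 < φ j) (σ : ℝ) (hσ : 0 < σ)
    (Y : ((j : Fin J) × Fin (n j)) → ℝ) (i : Fin J) :
    let X₁ : Matrix ((j : Fin J) × Fin (n j)) (Fin 1) ℝ := fun _ _ => 1
    let X₂ : Matrix ((j : Fin J) × Fin (n j)) (Fin J) ℝ :=
      fun m j => if m.1 = j then 1 else 0
    let X : Matrix ((j : Fin J) × Fin (n j)) (Fin 1 ⊕ Fin J) ℝ := Matrix.fromCols X₁ X₂
    let Φ : Matrix ((j : Fin J) × Fin (n j)) ((j : Fin J) × Fin (n j)) ℝ :=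
      Matrix.diagonal (fun m => (φ m.1) ^ 2)
    let V : Matrix (Fin 1 ⊕ Fin J) (Fin 1 ⊕ Fin J) ℝ :=
      (Xᵀ * Φ⁻¹ * X +
        Matrix.fromBlocks 0 0 0 ((σ ^ 2)⁻¹ • (1 : Matrix (Fin J) (Fin J) ℝ)))⁻¹
    let τ : Fin J → ℝ := fun j => (n j : ℝ) / ((n j : ℝ) * σ ^ 2 + (φ j) ^ 2)
    let ρ : Fin J → Fin J → ℝ := fun i' j =>
      ((φ i') ^ 2 / ((n i' : ℝ) * σ ^ 2 + (φ i') ^ 2)) * (τ j / ∑ k, τ k)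
    let Ybar : Fin J → ℝ := fun j => (∑ k : Fin (n j), Y ⟨j, k⟩) / (n j : ℝ)
    -- the common row of X for observations in cluster i
    let x : Fin 1 ⊕ Fin J → ℝ := Sum.elim (fun _ => 1) (fun j => if j = i then 1 else 0)
    x ⬝ᵥ ((V * Xᵀ * Φ⁻¹) *ᵥ Y) =
      ((n i : ℝ) * σ ^ 2 / ((n i : ℝ) * σ ^ 2 + (φ i) ^ 2) + ρ i i) * Ybar i +
        ∑ j ∈ Finset.univ \ {i}, ρ i j * Ybar j :=
  stmt_7_general J n hn φ hφ σ hσ Y i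
end

section
/- In the one-way design, the upper-left 1×1 block of V (the entry of V corresponding to the intercept column X₁) equals (Σ_{j=1}^{J} τⱼ)⁻¹. -/
/-!
`V⁻¹` is the arrowhead matrix `[[∑ a, aᵀ], [a, diagonal d]]` with `a j = n j / φ j ^ 2` and
`d j = a j + σ⁻²`. Its top-left inverse block is the inverse of the Schur complement
`∑ j, (a j - a j ^ 2 / d j)`, and each summand simplifies to `τ j`.
-/

open Matrix

namespace Matrix

variable {m n α : Type*} [Fintype m] [Fintype n] [DecidableEq m] [DecidableEq n] [CommRing α]

theorem toBlocks₁₁_inv_fromBlocks_of_isUnit₂₂ (A : Matrix m m α) (B : Matrix m n α)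
    (C : Matrix n m α) {D : Matrix n n α} (hD : IsUnit D) :
    (fromBlocks A B C D)⁻¹.toBlocks₁₁ = (A - B * D⁻¹ * C)⁻¹ := by
  have := hD.invertible
  by_cases hS : IsUnit (A - B * ⅟D * C)
  · have := hS.invertible
    have := fromBlocks₂₂Invertible A B C D
    rw [← invOf_eq_nonsing_inv, invOf_fromBlocks₂₂_eq, toBlocks_fromBlocks₁₁,
      invOf_eq_nonsing_inv, invOf_eq_nonsing_inv]
  · -- both sides are the junk value `0`
    have hM : ¬IsUnit (fromBlocks A B C D) := by rwa [isUnit_fromBlocks_iff_of_invertible₂₂]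
    rw [invOf_eq_nonsing_inv] at hS
    rw [isUnit_iff_isUnit_det] at hS hM
    rw [nonsing_inv_apply_not_isUnit _ hS, nonsing_inv_apply_not_isUnit _ hM]
    rfl

theorem inv_diagonal_of_ne_zero {K : Type*} [Field K] {v : n → K} (hv : ∀ i, v i ≠ 0) :
    (diagonal v)⁻¹ = diagonal fun i => (v i)⁻¹ :=
  inv_eq_right_inv <| by simp [diagonal_mul_diagonal, hv]

theorem const_sub_row_mul_inv_diagonal_mul_col {ι o K : Type*} [Fintype ι] [DecidableEq ι]
    [Field K] (s : K) (a d : ι → K) (hd : ∀ j, d j ≠ 0) :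
    (of fun _ _ => s : Matrix o o K) - of (fun _ j => a j) * (diagonal d)⁻¹ *
        of (fun j _ => a j) =
      of fun _ _ => s - ∑ j, a j ^ 2 / d j := by
  ext
  rw [inv_diagonal_of_ne_zero hd]
  simp [mul_apply, diagonal_apply, div_eq_mul_inv, sq, mul_right_comm]

end Matrix

section OneWayDesign

variable {ι : Type*} [Fintype ι] [DecidableEq ι] (κ : ι → Type*) [∀ j, Fintype (κ j)]
  [DecidableEq ((j : ι) × κ j)] (o R : Type*) [CommRing R]

def oneWayDesign : Matrix ((j : ι) × κ j) (o ⊕ ι) R :=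
  fromCols (of fun _ _ => 1) (of fun m j => if m.1 = j then 1 else 0)

variable {κ o R}

theorem oneWayDesign_transpose_mul_diagonal_mul (w : ι → R) :
    (oneWayDesign κ o R)ᵀ * diagonal (fun m : (j : ι) × κ j => w m.1) * oneWayDesign κ o R =
      fromBlocks (of fun _ _ => ∑ j, Fintype.card (κ j) * w j)
        (of fun _ j => Fintype.card (κ j) * w j) (of fun j _ => Fintype.card (κ j) * w j)
        (diagonal fun j => Fintype.card (κ j) * w j) := by
  rw [oneWayDesign, transpose_fromCols, fromRows_mul, fromRows_mul_fromCols]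
  congr 1 <;> ext i j <;>
    simp [mul_apply, diagonal_apply, ← Finset.univ_sigma_univ, Finset.sum_sigma, eq_comm]
  split_ifs with h <;> simp [h]

end OneWayDesign

theorem div_sub_sq_div_div_add_inv {x p s : ℝ} (hx : 0 ≤ x) (hp : 0 < p) (hs : 0 < s) :
    x / p - (x / p) ^ 2 / (x / p + s⁻¹) = x / (x * s + p) := by
  have : 0 < x * s + p := by positivity
  field_simp
  ring

theorem stmt_8_general (J : ℕ) (n : Fin J → ℕ)
    (φ : Fin J → ℝ) (hφ : ∀ j, 0 < φ j) (σ : ℝ) (hσ : 0 < σ) :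
    let X₁ : Matrix ((j : Fin J) × Fin (n j)) (Fin 1) ℝ := fun _ _ => 1
    let X₂ : Matrix ((j : Fin J) × Fin (n j)) (Fin J) ℝ :=
      fun m j => if m.1 = j then 1 else 0
    let X : Matrix ((j : Fin J) × Fin (n j)) (Fin 1 ⊕ Fin J) ℝ := Matrix.fromCols X₁ X₂
    let Φ : Matrix ((j : Fin J) × Fin (n j)) ((j : Fin J) × Fin (n j)) ℝ :=
      Matrix.diagonal (fun m => (φ m.1) ^ 2)
    let V : Matrix (Fin 1 ⊕ Fin J) (Fin 1 ⊕ Fin J) ℝ :=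
      (Xᵀ * Φ⁻¹ * X +
        Matrix.fromBlocks 0 0 0 ((σ ^ 2)⁻¹ • (1 : Matrix (Fin J) (Fin J) ℝ)))⁻¹
    let τ : Fin J → ℝ := fun j => (n j : ℝ) / ((n j : ℝ) * σ ^ 2 + (φ j) ^ 2)
    V.toBlocks₁₁ 0 0 = (∑ j, τ j)⁻¹ := by
  intro X₁ X₂ X Φ V τ
  set a : Fin J → ℝ := fun j => n j / φ j ^ 2
  set d : Fin J → ℝ := fun j => a j + (σ ^ 2)⁻¹
  have hd : ∀ j, d j ≠ 0 := fun j => by have := hφ j; positivity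
  have hΦ : Φ⁻¹ = diagonal fun m => (φ m.1 ^ 2)⁻¹ :=
    inv_diagonal_of_ne_zero fun m => by have := hφ m.1; positivity
  have hM : Xᵀ * Φ⁻¹ * X + fromBlocks 0 0 0 ((σ ^ 2)⁻¹ • 1) =
      fromBlocks (of fun _ _ => ∑ j, a j) (of fun _ j => a j) (of fun j _ => a j)
        (diagonal d) := by
    rw [hΦ, show X = oneWayDesign (fun j => Fin (n j)) (Fin 1) ℝ from rfl,
      oneWayDesign_transpose_mul_diagonal_mul (fun j => (φ j ^ 2)⁻¹), fromBlocks_add]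
    simp [a, d, div_eq_mul_inv, smul_one_eq_diagonal]
  calc V.toBlocks₁₁ 0 0
      = ((of fun _ _ => ∑ j, a j) - of (fun _ j => a j) * (diagonal d)⁻¹ *
          of (fun j _ => a j) : Matrix (Fin 1) (Fin 1) ℝ)⁻¹ 0 0 := by
        rw [show V = _ from congrArg Inv.inv hM, toBlocks₁₁_inv_fromBlocks_of_isUnit₂₂]
        exact isUnit_diagonal.2 (Pi.isUnit_iff.2 fun j => (hd j).isUnit)
    _ = (∑ j, a j - ∑ j, a j ^ 2 / d j)⁻¹ := by
        rw [const_sub_row_mul_inv_diagonal_mul_col _ _ _ hd, inv_subsingleton]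
        simp
    _ = (∑ j, τ j)⁻¹ := by
        rw [← Finset.sum_sub_distrib]
        congr 1
        exact Finset.sum_congr rfl fun j _ => div_sub_sq_div_div_add_inv (Nat.cast_nonneg _)
          (by have := hφ j; positivity) (by positivity)

/-- In the one-way design, the upper-left 1×1 block of `V` (the entry
corresponding to the intercept column `X₁`) equals `(Σⱼ τⱼ)⁻¹` with `τⱼ = nⱼ/(nⱼσ² + φⱼ²)`. -/
theorem stmt_8 (J : ℕ) (hJ : 0 < J) (n : Fin J → ℕ) (hn : ∀ j, 1 ≤ n j)
    (φ : Fin J → ℝ) (hφ : ∀ j, 0 < φ j) (σ : ℝ) (hσ : 0 < σ) :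
    let X₁ : Matrix ((j : Fin J) × Fin (n j)) (Fin 1) ℝ := fun _ _ => 1
    let X₂ : Matrix ((j : Fin J) × Fin (n j)) (Fin J) ℝ :=
      fun m j => if m.1 = j then 1 else 0
    let X : Matrix ((j : Fin J) × Fin (n j)) (Fin 1 ⊕ Fin J) ℝ := Matrix.fromCols X₁ X₂
    let Φ : Matrix ((j : Fin J) × Fin (n j)) ((j : Fin J) × Fin (n j)) ℝ :=
      Matrix.diagonal (fun m => (φ m.1) ^ 2)
    let V : Matrix (Fin 1 ⊕ Fin J) (Fin 1 ⊕ Fin J) ℝ :=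
      (Xᵀ * Φ⁻¹ * X +
        Matrix.fromBlocks 0 0 0 ((σ ^ 2)⁻¹ • (1 : Matrix (Fin J) (Fin J) ℝ)))⁻¹
    let τ : Fin J → ℝ := fun j => (n j : ℝ) / ((n j : ℝ) * σ ^ 2 + (φ j) ^ 2)
    V.toBlocks₁₁ 0 0 = (∑ j, τ j)⁻¹ :=
  stmt_8_general J n φ hφ σ hσ
end
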